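/- arXiv:2510.17333 — 2 statements merged into one kernel-verified Lean document; each statement's English description precedes it below -/
import Mathlib

section
/- Suppose R ⪰ 0 (positive semidefinite) and there exists a symmetric matrix X ∈ ℝ^{n×n} with X ≻ 0 such that L(X) ≺ 0 (negative definite). Then the system satisfies quadratic performance specified by P. -/
/-!
With the storage function `V x = xᵀ X x`, evaluating `L(X) ≺ 0` at `(ξ(t), w(t))` gives the strict
dissipation inequality `V(ξ(t+1)) - V(ξ(t)) + s(t) ≤ -ε (|ξ(t)|² + |w(t)|²)`, where `s(t)` is the
supply `(w(t), z(t))ᵀ P (w(t), z(t))`. For `w = 0`, `R ⪰ 0` makes `s ≥ 0`, so the inequality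
telescopes to `ε ∑ |ξ(t)|² ≤ V(ξ(0))` and `ξ → 0`. For `ξ(0) = 0` and `w ∈ ℓ²`, `R ⪰ 0` bounds `-s`
by `(ε/2) |ξ|² + K |w|²`, so telescoping puts `ξ` in `ℓ²`; then `s`, a quadratic form in `(ξ, w)`,
is summable, and telescoping once more with `V ≥ 0`, `V(ξ(0)) = 0` gives `∑ s ≤ -ε ∑ |w|²`.
-/

open Matrix Filter Topology

/-- Trajectories of the discrete-time LTI system
`ξ(t+1) = A ξ(t) + B w(t)`, `z(t) = C ξ(t) + D w(t)`. -/
def IsTraj {n m q : ℕ} (A : Matrix (Fin n) (Fin n) ℝ) (B : Matrix (Fin n) (Fin m) ℝ)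
    (C : Matrix (Fin q) (Fin n) ℝ) (D : Matrix (Fin q) (Fin m) ℝ)
    (ξ : ℕ → Fin n → ℝ) (w : ℕ → Fin m → ℝ) (z : ℕ → Fin q → ℝ) : Prop :=
  ∀ t : ℕ, ξ (t + 1) = A.mulVec (ξ t) + B.mulVec (w t) ∧
    z t = C.mulVec (ξ t) + D.mulVec (w t)

/-- The system satisfies quadratic performance specified by `P`:
(i) asymptotic stability for zero performance input, and
(ii) for some `ε > 0`, for every trajectory with `ξ(0) = 0` and square-summable input `w`,
the performance series converges and its value is at most `-ε ∑ wᵀw`. -/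
def QuadPerf {n m q : ℕ} (A : Matrix (Fin n) (Fin n) ℝ) (B : Matrix (Fin n) (Fin m) ℝ)
    (C : Matrix (Fin q) (Fin n) ℝ) (D : Matrix (Fin q) (Fin m) ℝ)
    (P : Matrix (Fin m ⊕ Fin q) (Fin m ⊕ Fin q) ℝ) : Prop :=
  (∀ ξ : ℕ → Fin n → ℝ, (∀ t : ℕ, ξ (t + 1) = A.mulVec (ξ t)) →
      Tendsto ξ atTop (𝓝 0)) ∧
  ∃ ε > (0 : ℝ), ∀ ξ w z, IsTraj A B C D ξ w z → ξ 0 = 0 →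
    Summable (fun t => w t ⬝ᵥ w t) →
    ∃ l : ℝ,
      Tendsto (fun N => ∑ t ∈ Finset.range N,
        Sum.elim (w t) (z t) ⬝ᵥ P.mulVec (Sum.elim (w t) (z t))) atTop (𝓝 l) ∧
      l ≤ -ε * ∑' t, w t ⬝ᵥ w t

/-- The LMI matrix
`L(X) = [[I,0],[A,B]]ᵀ diag(-X, X) [[I,0],[A,B]] + [[0,I],[C,D]]ᵀ P [[0,I],[C,D]]`. -/
noncomputable def Lmat {n m q : ℕ} (A : Matrix (Fin n) (Fin n) ℝ) (B : Matrix (Fin n) (Fin m) ℝ)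
    (C : Matrix (Fin q) (Fin n) ℝ) (D : Matrix (Fin q) (Fin m) ℝ)
    (P : Matrix (Fin m ⊕ Fin q) (Fin m ⊕ Fin q) ℝ) (X : Matrix (Fin n) (Fin n) ℝ) :
    Matrix (Fin n ⊕ Fin m) (Fin n ⊕ Fin m) ℝ :=
  (Matrix.fromBlocks (1 : Matrix (Fin n) (Fin n) ℝ) 0 A B)ᵀ * Matrix.fromBlocks (-X) 0 0 X * Matrix.fromBlocks 1 0 A B
    + (Matrix.fromBlocks 0 (1 : Matrix (Fin m) (Fin m) ℝ) C D)ᵀ * P * Matrix.fromBlocks 0 1 C D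

section QuadraticBounds

variable {ι κ : Type*} [Fintype ι] [Fintype κ]

lemma dotProduct_self_nonneg (x : ι → ℝ) : 0 ≤ x ⬝ᵥ x :=
  Finset.sum_nonneg fun i _ => mul_self_nonneg (x i)

lemma mul_self_le_dotProduct_self (x : ι → ℝ) (i : ι) : x i * x i ≤ x ⬝ᵥ x :=
  Finset.single_le_sum (fun j _ => mul_self_nonneg (x j)) (Finset.mem_univ i)

lemma exists_abs_dotProduct_mulVec_le (M : Matrix ι κ ℝ) {δ : ℝ} (hδ : 0 < δ) :
    ∃ K, ∀ u v, |u ⬝ᵥ M *ᵥ v| ≤ K * (u ⬝ᵥ u) + δ * (v ⬝ᵥ v) := by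
  set c := ∑ i, ∑ j, |M i j|
  have hc : 0 ≤ c := Finset.sum_nonneg fun i _ => Finset.sum_nonneg fun j _ => abs_nonneg _
  set k := (c + 1) / δ
  have hk : 0 < k := by positivity
  refine ⟨c * k, fun u v => ?_⟩
  have hentry : ∀ i j, |u i * (M i j * v j)| ≤ |M i j| * (k * (u ⬝ᵥ u) + k⁻¹ * (v ⬝ᵥ v)) := by
    intro i j
    rw [abs_mul, abs_mul, mul_left_comm]
    refine mul_le_mul_of_nonneg_left ?_ (abs_nonneg _)
    have hyoung : |u i| * |v j| ≤ k * (u i * u i) + k⁻¹ * (v j * v j) := by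
      have hsq : 0 ≤ k⁻¹ * (k * |u i| - |v j|) ^ 2 := by positivity
      have hexp : k⁻¹ * (k * |u i| - |v j|) ^ 2
          = k * (u i * u i) - 2 * (|u i| * |v j|) + k⁻¹ * (v j * v j) := by
        rw [← abs_mul_abs_self (u i), ← abs_mul_abs_self (v j)]
        field_simp
        ring
      nlinarith [abs_nonneg (u i), abs_nonneg (v j)]
    nlinarith [mul_self_le_dotProduct_self u i, mul_self_le_dotProduct_self v j, inv_pos.2 hk]
  have hsum : |u ⬝ᵥ M *ᵥ v| ≤ c * (k * (u ⬝ᵥ u) + k⁻¹ * (v ⬝ᵥ v)) := by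
    have hexp : u ⬝ᵥ M *ᵥ v = ∑ i, ∑ j, u i * (M i j * v j) := by
      simp [dotProduct, mulVec, Finset.mul_sum]
    rw [hexp, Finset.sum_mul]
    refine (Finset.abs_sum_le_sum_abs _ _).trans (Finset.sum_le_sum fun i _ => ?_)
    rw [Finset.sum_mul]
    exact (Finset.abs_sum_le_sum_abs _ _).trans (Finset.sum_le_sum fun j _ => hentry i j)
  have hck : c * k⁻¹ ≤ δ := by
    rw [inv_div, ← mul_div_assoc, div_le_iff₀ (by positivity)]
    nlinarith
  nlinarith [dotProduct_self_nonneg v]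

lemma exists_abs_dotProduct_mulVec_self_le (M : Matrix ι ι ℝ) :
    ∃ K, ∀ x, |x ⬝ᵥ M *ᵥ x| ≤ K * (x ⬝ᵥ x) := by
  obtain ⟨K, hK⟩ := exists_abs_dotProduct_mulVec_le M one_pos
  exact ⟨K + 1, fun x => by linarith [hK x x]⟩

lemma dotProduct_transpose_mul_mul_mulVec (G : Matrix ι κ ℝ) (N : Matrix ι ι ℝ) (v : κ → ℝ) :
    v ⬝ᵥ (Gᵀ * N * G) *ᵥ v = (G *ᵥ v) ⬝ᵥ N *ᵥ (G *ᵥ v) := by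
  rw [← mulVec_mulVec, ← mulVec_mulVec, dotProduct_mulVec, vecMul_transpose]

open MatrixOrder in
lemma Matrix.PosDef.exists_pos_mul_dotProduct_self_le [DecidableEq ι] {M : Matrix ι ι ℝ}
    (hM : M.PosDef) : ∃ ε > 0, ∀ x, ε * (x ⬝ᵥ x) ≤ x ⬝ᵥ M *ᵥ x := by
  cases isEmpty_or_nonempty ι
  · exact ⟨1, one_pos, fun x => by simp [dotProduct]⟩
  obtain ⟨ε, hε, hle⟩ := (CFC.exists_pos_algebraMap_le_iff hM.isHermitian).2
    ((StarOrderedRing.isStrictlyPositive_iff_spectrum_pos (R := ℝ) M hM.isHermitian).1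
      hM.isStrictlyPositive)
  refine ⟨ε, hε, fun x => ?_⟩
  simpa [sub_mulVec, Algebra.algebraMap_eq_smul_one, smul_mulVec] using
    (Matrix.le_iff.1 hle).dotProduct_mulVec_nonneg x

lemma Filter.Tendsto.of_dotProduct_self {α : Type*} {l : Filter α} {x : α → ι → ℝ}
    (hx : Tendsto (fun a => x a ⬝ᵥ x a) l (𝓝 0)) : Tendsto x l (𝓝 0) := by
  rw [tendsto_pi_nhds]
  intro i
  rw [Pi.zero_apply, tendsto_zero_iff_abs_tendsto_zero]
  have hsqrt : Tendsto (fun a => √(x a ⬝ᵥ x a)) l (𝓝 0) := by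
    simpa using hx.sqrt
  refine squeeze_zero (fun a => abs_nonneg _) (fun a => ?_) hsqrt
  rw [Function.comp_apply, ← Real.sqrt_mul_self_eq_abs]
  exact Real.sqrt_le_sqrt (mul_self_le_dotProduct_self (x a) i)

end QuadraticBounds

section StorageFunctions

variable {V a b p : ℕ → ℝ}

lemma summable_of_sub_le_sub (hV : ∀ t, 0 ≤ V t) (ha : ∀ t, 0 ≤ a t) (hb : Summable b)
    (hb₀ : ∀ t, 0 ≤ b t) (hstep : ∀ t, V (t + 1) - V t ≤ b t - a t) : Summable a := by
  refine summable_of_sum_range_le ha (c := V 0 + ∑' t, b t) fun N => ?_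
  have htel := Finset.sum_range_sub V N
  have hsum := Finset.sum_le_sum fun t (_ : t ∈ Finset.range N) => hstep t
  rw [htel, Finset.sum_sub_distrib] at hsum
  linarith [hV N, hb.sum_le_tsum (Finset.range N) fun t _ => hb₀ t]

lemma tsum_le_of_sub_add_le {ε : ℝ} (hV : ∀ t, 0 ≤ V t) (hV₀ : V 0 = 0) (hp : Summable p)
    (hb : Summable b) (hstep : ∀ t, V (t + 1) - V t + p t ≤ -ε * b t) :
    ∑' t, p t ≤ -ε * ∑' t, b t := by
  refine le_of_tendsto_of_tendsto' hp.hasSum.tendsto_sum_nat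
    (hb.hasSum.tendsto_sum_nat.const_mul (-ε)) fun N => ?_
  have htel := Finset.sum_range_sub V N
  have hsum := Finset.sum_le_sum fun t (_ : t ∈ Finset.range N) => hstep t
  rw [Finset.sum_add_distrib, htel, ← Finset.mul_sum] at hsum
  linarith [hV N]

end StorageFunctions

section Supply

variable {n m q : Type*} [Fintype n] [Fintype m]

lemma sumElim_dotProduct_fromBlocks_mulVec [Fintype q] (Q : Matrix m m ℝ) (S : Matrix m q ℝ)
    (R : Matrix q q ℝ) (w : m → ℝ) (z : q → ℝ) :
    Sum.elim w z ⬝ᵥ fromBlocks Q S Sᵀ R *ᵥ Sum.elim w z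
      = w ⬝ᵥ Q *ᵥ w + 2 * (w ⬝ᵥ S *ᵥ z) + z ⬝ᵥ R *ᵥ z := by
  have hS : z ⬝ᵥ Sᵀ *ᵥ w = w ⬝ᵥ S *ᵥ z := by
    rw [dotProduct_mulVec, vecMul_transpose, dotProduct_comm]
  rw [fromBlocks_mulVec]
  simp only [Sum.elim_comp_inl, Sum.elim_comp_inr, sumElim_dotProduct_sumElim, dotProduct_add, hS]
  ring

lemma exists_neg_supply_le [Fintype q] (C : Matrix q n ℝ) (D : Matrix q m ℝ)
    (Q : Matrix m m ℝ) (S : Matrix m q ℝ) {R : Matrix q q ℝ} (hR : R.PosSemidef)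
    {δ : ℝ} (hδ : 0 < δ) :
    ∃ K, ∀ x w, -(Sum.elim w (C *ᵥ x + D *ᵥ w) ⬝ᵥ
      fromBlocks Q S Sᵀ R *ᵥ Sum.elim w (C *ᵥ x + D *ᵥ w)) ≤ δ * (x ⬝ᵥ x) + K * (w ⬝ᵥ w) := by
  obtain ⟨KQ, hQ⟩ := exists_abs_dotProduct_mulVec_self_le Q
  obtain ⟨KD, hD⟩ := exists_abs_dotProduct_mulVec_self_le (S * D)
  obtain ⟨KC, hC⟩ := exists_abs_dotProduct_mulVec_le (S * C) (half_pos hδ)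
  refine ⟨KQ + 2 * KC + 2 * KD, fun x w => ?_⟩
  have hSz : w ⬝ᵥ S *ᵥ (C *ᵥ x + D *ᵥ w) = w ⬝ᵥ (S * C) *ᵥ x + w ⬝ᵥ (S * D) *ᵥ w := by
    rw [mulVec_add, dotProduct_add, mulVec_mulVec, mulVec_mulVec]
  rw [sumElim_dotProduct_fromBlocks_mulVec, hSz]
  have hRz := hR.dotProduct_mulVec_nonneg (C *ᵥ x + D *ᵥ w)
  simp only [star_trivial] at hRz
  linarith [neg_abs_le (w ⬝ᵥ Q *ᵥ w), neg_abs_le (w ⬝ᵥ (S * C) *ᵥ x),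
    neg_abs_le (w ⬝ᵥ (S * D) *ᵥ w), hQ w, hC w x, hD w]

lemma fromBlocks_zero_one_mulVec_sumElim [DecidableEq m]
    (C : Matrix q n ℝ) (D : Matrix q m ℝ) (x : n → ℝ) (w : m → ℝ) :
    fromBlocks 0 1 C D *ᵥ Sum.elim x w = Sum.elim w (C *ᵥ x + D *ᵥ w) := by
  simp [fromBlocks_mulVec]

lemma exists_abs_supply_le [Fintype q] [DecidableEq m] (C : Matrix q n ℝ)
    (D : Matrix q m ℝ) (P : Matrix (m ⊕ q) (m ⊕ q) ℝ) :
    ∃ K, ∀ x w, |Sum.elim w (C *ᵥ x + D *ᵥ w) ⬝ᵥ P *ᵥ Sum.elim w (C *ᵥ x + D *ᵥ w)|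
      ≤ K * (x ⬝ᵥ x + w ⬝ᵥ w) := by
  set G : Matrix (m ⊕ q) (n ⊕ m) ℝ := fromBlocks 0 1 C D
  obtain ⟨K, hK⟩ := exists_abs_dotProduct_mulVec_self_le (Gᵀ * P * G)
  refine ⟨K, fun x w => ?_⟩
  have h := hK (Sum.elim x w)
  rwa [dotProduct_transpose_mul_mul_mulVec, fromBlocks_zero_one_mulVec_sumElim,
    sumElim_dotProduct_sumElim] at h

end Supply

section Dissipation

variable {n m q : ℕ} {A : Matrix (Fin n) (Fin n) ℝ} {B : Matrix (Fin n) (Fin m) ℝ}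
  {C : Matrix (Fin q) (Fin n) ℝ} {D : Matrix (Fin q) (Fin m) ℝ}
  {P : Matrix (Fin m ⊕ Fin q) (Fin m ⊕ Fin q) ℝ} {X : Matrix (Fin n) (Fin n) ℝ} {ε : ℝ}

def StrictDissipation (A : Matrix (Fin n) (Fin n) ℝ) (B : Matrix (Fin n) (Fin m) ℝ)
    (C : Matrix (Fin q) (Fin n) ℝ) (D : Matrix (Fin q) (Fin m) ℝ)
    (P : Matrix (Fin m ⊕ Fin q) (Fin m ⊕ Fin q) ℝ) (X : Matrix (Fin n) (Fin n) ℝ) (ε : ℝ) :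
    Prop :=
  ∀ x w, (A *ᵥ x + B *ᵥ w) ⬝ᵥ X *ᵥ (A *ᵥ x + B *ᵥ w) - x ⬝ᵥ X *ᵥ x
      + Sum.elim w (C *ᵥ x + D *ᵥ w) ⬝ᵥ P *ᵥ Sum.elim w (C *ᵥ x + D *ᵥ w)
    ≤ -ε * (x ⬝ᵥ x + w ⬝ᵥ w)

lemma sumElim_dotProduct_Lmat_mulVec (x : Fin n → ℝ) (w : Fin m → ℝ) :
    Sum.elim x w ⬝ᵥ Lmat A B C D P X *ᵥ Sum.elim x w
      = (A *ᵥ x + B *ᵥ w) ⬝ᵥ X *ᵥ (A *ᵥ x + B *ᵥ w) - x ⬝ᵥ X *ᵥ x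
        + Sum.elim w (C *ᵥ x + D *ᵥ w) ⬝ᵥ P *ᵥ Sum.elim w (C *ᵥ x + D *ᵥ w) := by
  have hstate : fromBlocks 1 0 A B *ᵥ Sum.elim x w = Sum.elim x (A *ᵥ x + B *ᵥ w) := by
    simp [fromBlocks_mulVec]
  -- `Lmat` elaborates its products in `CStarMatrix`; restate them as `Matrix` products
  have hLmat : Lmat A B C D P X
      = (fromBlocks 1 0 A B : Matrix (Fin n ⊕ Fin n) (Fin n ⊕ Fin m) ℝ)ᵀ
          * (fromBlocks (-X) 0 0 X : Matrix (Fin n ⊕ Fin n) (Fin n ⊕ Fin n) ℝ)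
          * (fromBlocks 1 0 A B : Matrix (Fin n ⊕ Fin n) (Fin n ⊕ Fin m) ℝ)
        + (fromBlocks 0 1 C D : Matrix (Fin m ⊕ Fin q) (Fin n ⊕ Fin m) ℝ)ᵀ
          * P * (fromBlocks 0 1 C D : Matrix (Fin m ⊕ Fin q) (Fin n ⊕ Fin m) ℝ) := rfl
  rw [hLmat, add_mulVec, dotProduct_add, dotProduct_transpose_mul_mul_mulVec,
    dotProduct_transpose_mul_mul_mulVec, hstate, fromBlocks_zero_one_mulVec_sumElim,
    fromBlocks_mulVec]
  simp only [Sum.elim_comp_inl, Sum.elim_comp_inr, neg_mulVec, zero_mulVec, add_zero, zero_add,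
    sumElim_dotProduct_sumElim, dotProduct_neg, add_dotProduct]
  ring

lemma exists_strictDissipation_of_posDef_neg_Lmat (hL : (-Lmat A B C D P X).PosDef) :
    ∃ ε > 0, StrictDissipation A B C D P X ε := by
  obtain ⟨ε, hε, hbound⟩ := hL.exists_pos_mul_dotProduct_self_le
  refine ⟨ε, hε, fun x w => ?_⟩
  have h := hbound (Sum.elim x w)
  rw [neg_mulVec, dotProduct_neg, sumElim_dotProduct_sumElim,
    sumElim_dotProduct_Lmat_mulVec] at h
  linarith

variable {Q : Matrix (Fin m) (Fin m) ℝ} {S : Matrix (Fin m) (Fin q) ℝ}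
  {R : Matrix (Fin q) (Fin q) ℝ}

lemma StrictDissipation.tendsto_zero (h : StrictDissipation A B C D (fromBlocks Q S Sᵀ R) X ε)
    (hε : 0 < ε) (hX : X.PosSemidef) (hR : R.PosSemidef) {ξ : ℕ → Fin n → ℝ}
    (hξ : ∀ t, ξ (t + 1) = A *ᵥ ξ t) : Tendsto ξ atTop (𝓝 0) := by
  have hstep : ∀ t, ξ (t + 1) ⬝ᵥ X *ᵥ ξ (t + 1) - ξ t ⬝ᵥ X *ᵥ ξ t
      ≤ 0 - ε * (ξ t ⬝ᵥ ξ t) := by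
    intro t
    have hdiss := h (ξ t) 0
    have hsupply := hR.dotProduct_mulVec_nonneg (C *ᵥ ξ t)
    simp only [mulVec_zero, add_zero, sumElim_dotProduct_fromBlocks_mulVec, zero_dotProduct,
      dotProduct_zero, star_trivial] at hdiss hsupply
    rw [hξ]
    linarith
  have hV : ∀ t, 0 ≤ ξ t ⬝ᵥ X *ᵥ ξ t := fun t => by
    simpa using hX.dotProduct_mulVec_nonneg (ξ t)
  have hsummable := summable_of_sub_le_sub hV
    (fun t => mul_nonneg hε.le (dotProduct_self_nonneg (ξ t))) summable_zero (fun _ => le_rfl) hstep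
  refine Tendsto.of_dotProduct_self ?_
  simpa [hε.ne'] using hsummable.tendsto_atTop_zero.const_mul ε⁻¹

lemma StrictDissipation.performance (h : StrictDissipation A B C D (fromBlocks Q S Sᵀ R) X ε)
    (hε : 0 < ε) (hX : X.PosSemidef) (hR : R.PosSemidef) {ξ : ℕ → Fin n → ℝ}
    {w : ℕ → Fin m → ℝ} {z : ℕ → Fin q → ℝ} (htraj : IsTraj A B C D ξ w z) (h₀ : ξ 0 = 0)
    (hw : Summable fun t => w t ⬝ᵥ w t) :
    ∃ l, Tendsto (fun N => ∑ t ∈ Finset.range N,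
        Sum.elim (w t) (z t) ⬝ᵥ fromBlocks Q S Sᵀ R *ᵥ Sum.elim (w t) (z t)) atTop (𝓝 l) ∧
      l ≤ -ε * ∑' t, w t ⬝ᵥ w t := by
  set V := fun t => ξ t ⬝ᵥ X *ᵥ ξ t
  set p := fun t => Sum.elim (w t) (z t) ⬝ᵥ fromBlocks Q S Sᵀ R *ᵥ Sum.elim (w t) (z t)
  have hV : ∀ t, 0 ≤ V t := fun t => by simpa using hX.dotProduct_mulVec_nonneg (ξ t)
  have hstep : ∀ t, V (t + 1) - V t + p t ≤ -ε * (ξ t ⬝ᵥ ξ t + w t ⬝ᵥ w t) := by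
    intro t
    simp only [V, p, (htraj t).1, (htraj t).2]
    exact h (ξ t) (w t)
  obtain ⟨K, hK⟩ := exists_neg_supply_le C D Q S hR (half_pos hε)
  have hξ : Summable fun t => ξ t ⬝ᵥ ξ t := by
    refine (summable_mul_left_iff (half_pos hε).ne').1 <|
      summable_of_sub_le_sub hV (fun t => mul_nonneg (half_pos hε).le (dotProduct_self_nonneg _))
        (hw.mul_left |K|) (fun t => mul_nonneg (abs_nonneg K) (dotProduct_self_nonneg _))
        fun t => ?_
    have hsupply := hK (ξ t) (w t)
    rw [← (htraj t).2] at hsupply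
    nlinarith [hstep t, le_abs_self K, dotProduct_self_nonneg (w t)]
  obtain ⟨K', hK'⟩ := exists_abs_supply_le C D (fromBlocks Q S Sᵀ R)
  have hp : Summable p := by
    refine ((hξ.add hw).mul_left K').of_norm_bounded fun t => ?_
    simpa only [Real.norm_eq_abs, p, (htraj t).2] using hK' (ξ t) (w t)
  refine ⟨_, hp.hasSum.tendsto_sum_nat, tsum_le_of_sub_add_le hV (by simp [V, h₀]) hp hw
    fun t => ?_⟩
  nlinarith [hstep t, dotProduct_self_nonneg (ξ t)]

end Dissipation

theorem quadratic_performance_of_LMI_general {n m q : ℕ}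
    (A : Matrix (Fin n) (Fin n) ℝ) (B : Matrix (Fin n) (Fin m) ℝ)
    (C : Matrix (Fin q) (Fin n) ℝ) (D : Matrix (Fin q) (Fin m) ℝ)
    (Q : Matrix (Fin m) (Fin m) ℝ) (S : Matrix (Fin m) (Fin q) ℝ)
    (R : Matrix (Fin q) (Fin q) ℝ)
    (hRpsd : R.PosSemidef)
    (hX : ∃ X : Matrix (Fin n) (Fin n) ℝ, X.IsSymm ∧ X.PosDef ∧
      (-(Lmat A B C D (Matrix.fromBlocks Q S Sᵀ R) X)).PosDef) :
    QuadPerf A B C D (Matrix.fromBlocks Q S Sᵀ R) := by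
  obtain ⟨X, -, hXpd, hL⟩ := hX
  obtain ⟨ε, hε, hdiss⟩ := exists_strictDissipation_of_posDef_neg_Lmat hL
  exact ⟨fun ξ hξ => hdiss.tendsto_zero hε hXpd.posSemidef hRpsd hξ,
    ε, hε, fun ξ w z htraj h₀ hw => hdiss.performance hε hXpd.posSemidef hRpsd htraj h₀ hw⟩

/-- If `R ⪰ 0` and there exists a symmetric `X ≻ 0` with `L(X) ≺ 0`, then the system
satisfies quadratic performance specified by `P = [[Q, S], [Sᵀ, R]]`. -/
theorem quadratic_performance_of_LMI {n m q : ℕ}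
    (A : Matrix (Fin n) (Fin n) ℝ) (B : Matrix (Fin n) (Fin m) ℝ)
    (C : Matrix (Fin q) (Fin n) ℝ) (D : Matrix (Fin q) (Fin m) ℝ)
    (Q : Matrix (Fin m) (Fin m) ℝ) (S : Matrix (Fin m) (Fin q) ℝ)
    (R : Matrix (Fin q) (Fin q) ℝ) (hQ : Q.IsSymm) (hR : R.IsSymm)
    (hRpsd : R.PosSemidef)
    (hX : ∃ X : Matrix (Fin n) (Fin n) ℝ, X.IsSymm ∧ X.PosDef ∧
      (-(Lmat A B C D (Matrix.fromBlocks Q S Sᵀ R) X)).PosDef) :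
    QuadPerf A B C D (Matrix.fromBlocks Q S Sᵀ R) :=
  quadratic_performance_of_LMI_general A B C D Q S R hRpsd hX
end

section
/- Let x_c : ℕ → ℝ^r satisfy x_c(0) = 0 and the resetting recursion x_c(t+1) = B_c y(t) if T divides t, and x_c(t+1) = A_c x_c(t) + B_c y(t) otherwise. Then for every t ≥ 1: x_c(t) = Σ_{j=1}^{h(t)} A_c^{j−1} B_c y(t−j), where h(t) := ((t−1) mod T) + 1. Hence the resetting controller coincides with a finite-impulse-response controller whose horizon cycles periodically through the values 1, 2, …, T. -/
open Matrix

lemma mulVec_finset_sum {n m : ℕ} {ι : Type*} (A : Matrix (Fin n) (Fin m) ℝ)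
    (s : Finset ι) (f : ι → Fin m → ℝ) :
    A.mulVec (∑ i ∈ s, f i) = ∑ i ∈ s, A.mulVec (f i) :=
  map_sum (Matrix.mulVecLin A) f s

/-- The resetting controller coincides with an FIR controller whose horizon cycles
periodically through `1, 2, …, T`: if `x_c(0) = 0` and
`x_c(t+1) = B_c y(t)` when `T ∣ t`, `x_c(t+1) = A_c x_c(t) + B_c y(t)` otherwise,
then for every `t ≥ 1`, `x_c(t) = Σ_{j=1}^{h(t)} A_c^{j-1} B_c y(t-j)` with
`h(t) = ((t-1) mod T) + 1`. -/
theorem resetting_controller_is_cycling_FIR {r p : ℕ} (T : ℕ) (hT : 1 ≤ T)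
    (Ac : Matrix (Fin r) (Fin r) ℝ) (Bc : Matrix (Fin r) (Fin p) ℝ)
    (y : ℕ → Fin p → ℝ)
    (xc : ℕ → Fin r → ℝ) (hx0 : xc 0 = 0)
    (hrec : ∀ t : ℕ, xc (t + 1) =
      if T ∣ t then Bc.mulVec (y t)
      else Ac.mulVec (xc t) + Bc.mulVec (y t)) :
    ∀ t : ℕ, 1 ≤ t →
      xc t = ∑ j ∈ Finset.range ((t - 1) % T + 1),
        (Ac ^ j * Bc).mulVec (y (t - 1 - j)) := by
  intro t ht
  induction t with
  | zero => omega
  | succ s ih =>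
    rw [hrec s]
    by_cases hs : T ∣ s
    · have h0 : s % T = 0 := Nat.mod_eq_zero_of_dvd hs
      simp [hs, Nat.succ_sub_one, h0, Finset.sum_range_one]
    · have hs1 : 1 ≤ s := by
        rcases Nat.eq_zero_or_pos s with h | h
        · exact absurd (h ▸ dvd_zero T) hs
        · exact h
      have hT2 : 2 ≤ T := by
        rcases Nat.lt_or_ge T 2 with h | h
        · have hT1 : T = 1 := by omega
          exact absurd (hT1 ▸ one_dvd s) hs
        · exact h
      have h1 : s % T ≠ 0 := fun h => hs (Nat.dvd_of_mod_eq_zero h)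
      have hmod : s % T = (s - 1) % T + 1 := by
        have h2 : s = (s - 1) + 1 := by omega
        have h3 : s % T = ((s - 1) % T + 1) % T := by
          conv_lhs => rw [h2]
          rw [Nat.add_mod, Nat.mod_eq_of_lt (show 1 < T by omega)]
        have h4 : (s - 1) % T < T := Nat.mod_lt _ (by omega)
        rcases Nat.lt_or_ge ((s-1) % T + 1) T with h5 | h5
        · rw [h3, Nat.mod_eq_of_lt h5]
        · have h6 : (s-1) % T + 1 = T := by omega
          rw [h3, h6, Nat.mod_self] at h1; omega
      rw [if_neg hs, ih hs1, Nat.succ_sub_one, hmod]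
      conv_rhs => rw [Finset.sum_range_succ']
      rw [mulVec_finset_sum]
      congr 1
      · apply Finset.sum_congr rfl
        intro k _
        rw [Matrix.mulVec_mulVec, show s - (k+1) = s - 1 - k from by omega,
          pow_succ', Matrix.mul_assoc]
      · simp
end
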